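/- Let the data matrices X_0, X, U be generated by the system and satisfy the persistency of excitation assumption rank([X_0; U]) = mT + n. Let K ∈ ℝ^{m×n}, λ ∈ ℝ, and v ∈ ℝ^n with v ≠ 0 and (A − B K)v = λ v. Then there exist vectors α and β such that: (i) X_0 K_U α = v; (ii) X K_U α + X K_0 β = W Λ_λ X_0 K_U α; and (iii) (I_T ⊗ K) Z Λ_λ X_0 K_U α + U K_0 β = 0, i.e., [α; β] lies in Ker([X K_U − W Λ_λ X_0 K_U, X K_0]) ∩ Ker([(I_T ⊗ K) Z Λ_λ X_0 K_U, U K_0]). -/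

import Mathlib

/-!
Persistency of excitation makes `[X₀; U]` surjective, so the data can reproduce any initial state
together with any input sequence. Take `y ∈ Ker U` with `X₀ y = v` and `z ∈ Ker X₀` whose input is
the closed-loop input `u(t) = -λ^t K v`, and write `y = K_U α`, `z = K₀ β`. By linearity of the
dynamics, `X (y + z)` is the state sequence of the experiment started at `v` under that input;
since `v` is an eigenvector of `A - B K` this is `x(t) = λ^t v`, which is what (ii) and (iii) say.
-/

open Matrix

/-- The full state sequence over times `0, 1, …, T` built from the initial state `x0` and the
subsequent states `x 0 = x(1), …, x (T-1) = x(T)`. -/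
def stateSeq {n T : ℕ} (x0 : Fin n → ℝ) (x : Fin T → Fin n → ℝ) : Fin (T + 1) → Fin n → ℝ :=
  Fin.cases x0 x

/-- `(x0, u, x)` is a trajectory of the system `x(t+1) = A x(t) + B u(t)`. -/
def IsTrajectory {n m T : ℕ} (A : Matrix (Fin n) (Fin n) ℝ) (B : Matrix (Fin n) (Fin m) ℝ)
    (x0 : Fin n → ℝ) (u : Fin T → Fin m → ℝ) (x : Fin T → Fin n → ℝ) : Prop :=
  ∀ t : Fin T, x t = A.mulVec (stateSeq x0 x t.castSucc) + B.mulVec (u t)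

/-- The data matrices are generated by `N` experiments of length `T` on the system. -/
def DataGenerated {n m T N : ℕ} (A : Matrix (Fin n) (Fin n) ℝ) (B : Matrix (Fin n) (Fin m) ℝ)
    (X0 : Matrix (Fin n) (Fin N) ℝ) (X : Matrix (Fin T × Fin n) (Fin N) ℝ)
    (U : Matrix (Fin T × Fin m) (Fin N) ℝ) : Prop :=
  ∀ i : Fin N, IsTrajectory A B (fun j => X0 j i) (fun t j => U (t, j) i) (fun t j => X (t, j) i)

/-- The columns of `Kb` form a basis of `Ker M`. -/
def IsKerBasis {α β γ : Type*} [Fintype β] [Fintype γ]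
    (M : Matrix α β ℝ) (Kb : Matrix β γ ℝ) : Prop :=
  Function.Injective Kb.mulVecLin ∧ LinearMap.range Kb.mulVecLin = LinearMap.ker M.mulVecLin

/-- `Λ_λ = [I; λI; λ²I; …; λ^T I] ∈ ℝ^{n(T+1) × n}`. -/
def LamMat (T n : ℕ) (lam : ℝ) : Matrix (Fin (T + 1) × Fin n) (Fin n) ℝ :=
  Matrix.of fun p q => lam ^ (p.1 : ℕ) * (if p.2 = q then 1 else 0)

/-- `W = [0_{nT×n}  I_{nT}]`, the matrix extracting the last `nT` rows of `Λ_λ`. -/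
def Wmat (T n : ℕ) : Matrix (Fin T × Fin n) (Fin (T + 1) × Fin n) ℝ :=
  Matrix.of fun p q => if q.1 = p.1.succ ∧ q.2 = p.2 then 1 else 0

/-- `Z = [I_{nT}  0_{nT×n}]`, the matrix extracting the first `nT` rows of `Λ_λ`. -/
def Zmat (T n : ℕ) : Matrix (Fin T × Fin n) (Fin (T + 1) × Fin n) ℝ :=
  Matrix.of fun p q => if q.1 = p.1.castSucc ∧ q.2 = p.2 then 1 else 0

open Kronecker

section Trajectories

variable {n m T : ℕ} {A : Matrix (Fin n) (Fin n) ℝ} {B : Matrix (Fin n) (Fin m) ℝ}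

@[simp] lemma stateSeq_zero (x0 : Fin n → ℝ) (x : Fin T → Fin n → ℝ) :
    stateSeq x0 x 0 = x0 := rfl

@[simp] lemma stateSeq_succ (x0 : Fin n → ℝ) (x : Fin T → Fin n → ℝ) (t : Fin T) :
    stateSeq x0 x t.succ = x t := rfl

lemma stateSeq_sum_smul {ι : Type*} [Fintype ι] (c : ι → ℝ) (x0 : ι → Fin n → ℝ)
    (x : ι → Fin T → Fin n → ℝ) :
    stateSeq (∑ i, c i • x0 i) (∑ i, c i • x i) = ∑ i, c i • stateSeq (x0 i) (x i) := by
  funext s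
  cases s using Fin.cases <;> simp [Finset.sum_apply]

lemma IsTrajectory.sum_smul {ι : Type*} [Fintype ι] {x0 : ι → Fin n → ℝ}
    {u : ι → Fin T → Fin m → ℝ} {x : ι → Fin T → Fin n → ℝ}
    (h : ∀ i, IsTrajectory A B (x0 i) (u i) (x i)) (c : ι → ℝ) :
    IsTrajectory A B (∑ i, c i • x0 i) (∑ i, c i • u i) (∑ i, c i • x i) := by
  intro t
  simp only [stateSeq_sum_smul, Finset.sum_apply, Pi.smul_apply, mulVec_sum, mulVec_smul,
    h _ t, smul_add, Finset.sum_add_distrib]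

lemma IsTrajectory.unique {x0 : Fin n → ℝ} {u : Fin T → Fin m → ℝ} {x x' : Fin T → Fin n → ℝ}
    (h : IsTrajectory A B x0 u x) (h' : IsTrajectory A B x0 u x') : x = x' := by
  have hs : stateSeq x0 x = stateSeq x0 x' := by
    funext s
    induction s using Fin.induction with
    | zero => rfl
    | succ t ih => rw [stateSeq_succ, stateSeq_succ, h t, h' t, ih]
  funext t
  simpa using congrFun hs t.succ

lemma IsTrajectory.of_closedLoop_eigenvector {K : Matrix (Fin m) (Fin n) ℝ} {lam : ℝ}
    {v : Fin n → ℝ} (heig : (A - B * K) *ᵥ v = lam • v) :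
    IsTrajectory A B v (fun t : Fin T => -lam ^ (t : ℕ) • K *ᵥ v)
      (fun t => lam ^ ((t : ℕ) + 1) • v) := by
  have hs : ∀ s : Fin (T + 1),
      stateSeq v (fun t : Fin T => lam ^ ((t : ℕ) + 1) • v) s = lam ^ (s : ℕ) • v := by
    intro s
    cases s using Fin.cases <;> simp
  intro t
  change lam ^ ((t : ℕ) + 1) • v = A *ᵥ stateSeq _ _ t.castSucc + B *ᵥ (-lam ^ (t : ℕ) • K *ᵥ v)
  rw [hs, Fin.val_castSucc, pow_succ, mul_smul, ← heig]
  simp only [sub_mulVec, ← mulVec_mulVec, mulVec_smul, neg_smul, mulVec_neg, smul_sub]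
  abel

lemma DataGenerated.isTrajectory_mulVec {N : ℕ} {X0 : Matrix (Fin n) (Fin N) ℝ}
    {X : Matrix (Fin T × Fin n) (Fin N) ℝ} {U : Matrix (Fin T × Fin m) (Fin N) ℝ}
    (hdata : DataGenerated A B X0 X U) (g : Fin N → ℝ) :
    IsTrajectory A B (X0 *ᵥ g) (fun t j => (U *ᵥ g) (t, j)) (fun t j => (X *ᵥ g) (t, j)) := by
  convert IsTrajectory.sum_smul hdata g using 1 <;> ext <;>
    simp [mulVec, dotProduct, Finset.sum_apply, mul_comm]

end Trajectories

lemma LamMat_mulVec {n : ℕ} (T : ℕ) (lam : ℝ) (v : Fin n → ℝ) :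
    LamMat T n lam *ᵥ v = fun p => lam ^ (p.1 : ℕ) * v p.2 := by
  ext p
  simp [LamMat, mulVec, dotProduct]

lemma Wmat_mulVec {T n : ℕ} (w : Fin (T + 1) × Fin n → ℝ) :
    Wmat T n *ᵥ w = fun p => w (p.1.succ, p.2) := by
  ext p
  simp [Wmat, mulVec, dotProduct, Fintype.sum_prod_type, ite_and]

lemma Zmat_mulVec {T n : ℕ} (w : Fin (T + 1) × Fin n → ℝ) :
    Zmat T n *ᵥ w = fun p => w (p.1.castSucc, p.2) := by
  ext p
  simp [Zmat, mulVec, dotProduct, Fintype.sum_prod_type, ite_and]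

lemma one_kronecker_mulVec {R ι κ μ : Type*} [Semiring R] [Fintype ι] [DecidableEq ι]
    [Fintype κ] (K : Matrix μ κ R) (w : ι × κ → R) :
    ((1 : Matrix ι ι R) ⊗ₖ K) *ᵥ w = fun p => (K *ᵥ fun j => w (p.1, j)) p.2 := by
  ext p
  simp [mulVec, dotProduct, Fintype.sum_prod_type, one_apply, ite_mul]

lemma Matrix.exists_mulVec_eq_of_rank_fromRows {R ι₁ ι₂ κ : Type*} [Field R] [Fintype ι₁]
    [Fintype ι₂] [Fintype κ] {M₁ : Matrix ι₁ κ R} {M₂ : Matrix ι₂ κ R}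
    (h : (fromRows M₁ M₂).rank = Fintype.card ι₁ + Fintype.card ι₂) (a : ι₁ → R) (b : ι₂ → R) :
    ∃ g, M₁ *ᵥ g = a ∧ M₂ *ᵥ g = b := by
  have hrange : LinearMap.range (fromRows M₁ M₂).mulVecLin = ⊤ :=
    Submodule.eq_top_of_finrank_eq <| by
      rw [Module.finrank_fintype_fun_eq_card, Fintype.card_sum]
      exact h
  obtain ⟨g, hg⟩ := LinearMap.range_eq_top.mp hrange (Sum.elim a b)
  rw [mulVecLin_apply, fromRows_mulVec] at hg
  exact ⟨g, funext fun i => congrFun hg (.inl i), funext fun j => congrFun hg (.inr j)⟩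

lemma IsKerBasis.exists_mulVec_eq {α β γ : Type*} [Fintype β] [Fintype γ] {M : Matrix α β ℝ}
    {Kb : Matrix β γ ℝ} (h : IsKerBasis M Kb) {y : β → ℝ} (hy : M *ᵥ y = 0) :
    ∃ a, Kb *ᵥ a = y :=
  (h.2 ▸ hy : y ∈ LinearMap.range Kb.mulVecLin)

theorem stmt7_general {n m T N p q : ℕ}
    (A : Matrix (Fin n) (Fin n) ℝ) (B : Matrix (Fin n) (Fin m) ℝ)
    (X0 : Matrix (Fin n) (Fin N) ℝ) (X : Matrix (Fin T × Fin n) (Fin N) ℝ)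
    (U : Matrix (Fin T × Fin m) (Fin N) ℝ)
    (hdata : DataGenerated A B X0 X U)
    (KU : Matrix (Fin N) (Fin p) ℝ) (K0 : Matrix (Fin N) (Fin q) ℝ)
    (hKU : IsKerBasis U KU) (hK0 : IsKerBasis X0 K0)
    (hPE : (Matrix.fromRows X0 U).rank = m * T + n)
    (K : Matrix (Fin m) (Fin n) ℝ) (lam : ℝ) (v : Fin n → ℝ)
    (heig : (A - B * K).mulVec v = lam • v) :
    ∃ (α : Fin p → ℝ) (β : Fin q → ℝ),
      X0.mulVec (KU.mulVec α) = v ∧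
      X.mulVec (KU.mulVec α) + X.mulVec (K0.mulVec β) =
        (Wmat T n * LamMat T n lam).mulVec (X0.mulVec (KU.mulVec α)) ∧
      ((1 : Matrix (Fin T) (Fin T) ℝ) ⊗ₖ K * Zmat T n * LamMat T n lam).mulVec
          (X0.mulVec (KU.mulVec α)) + U.mulVec (K0.mulVec β) = 0 := by
  have hsteer := exists_mulVec_eq_of_rank_fromRows (M₁ := X0) (M₂ := U) (by simp [hPE]; ring)
  obtain ⟨y, hX0y, hUy⟩ := hsteer v 0
  obtain ⟨z, hX0z, hUz⟩ := hsteer 0 fun p => (-lam ^ (p.1 : ℕ) • K *ᵥ v) p.2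
  obtain ⟨α, rfl⟩ := hKU.exists_mulVec_eq hUy
  obtain ⟨β, rfl⟩ := hK0.exists_mulVec_eq hX0z
  have hX : X *ᵥ (KU *ᵥ α + K0 *ᵥ β) = fun p => lam ^ ((p.1 : ℕ) + 1) * v p.2 := by
    have htraj := hdata.isTrajectory_mulVec (KU *ᵥ α + K0 *ᵥ β)
    rw [mulVec_add, mulVec_add, hX0y, hX0z, add_zero, hUy, hUz, zero_add] at htraj
    have hx := htraj.unique (.of_closedLoop_eigenvector heig)
    funext p
    simpa using congrFun₂ hx p.1 p.2
  refine ⟨α, β, hX0y, ?_, ?_⟩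
  · rw [← mulVec_add, hX, hX0y, ← mulVec_mulVec, LamMat_mulVec, Wmat_mulVec]
    simp
  · rw [hX0y, hUz, ← mulVec_mulVec, ← mulVec_mulVec, LamMat_mulVec, Zmat_mulVec,
      one_kronecker_mulVec]
    ext p
    simp [mulVec, dotProduct, Finset.mul_sum, mul_left_comm]

/-- Under persistency of excitation, if `v ≠ 0` is an eigenvector of `A − B K`
with eigenvalue `λ`, then there exist `α, β` with `X₀ K_U α = v`,
`X K_U α + X K₀ β = W Λ_λ X₀ K_U α`, and `(I_T ⊗ K) Z Λ_λ X₀ K_U α + U K₀ β = 0`. -/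
theorem stmt7 {n m T N p q : ℕ}
    (A : Matrix (Fin n) (Fin n) ℝ) (B : Matrix (Fin n) (Fin m) ℝ)
    (X0 : Matrix (Fin n) (Fin N) ℝ) (X : Matrix (Fin T × Fin n) (Fin N) ℝ)
    (U : Matrix (Fin T × Fin m) (Fin N) ℝ)
    (hdata : DataGenerated A B X0 X U)
    (KU : Matrix (Fin N) (Fin p) ℝ) (K0 : Matrix (Fin N) (Fin q) ℝ)
    (hKU : IsKerBasis U KU) (hK0 : IsKerBasis X0 K0)
    (hPE : (Matrix.fromRows X0 U).rank = m * T + n)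
    (K : Matrix (Fin m) (Fin n) ℝ) (lam : ℝ) (v : Fin n → ℝ)
    (hv : v ≠ 0) (heig : (A - B * K).mulVec v = lam • v) :
    ∃ (α : Fin p → ℝ) (β : Fin q → ℝ),
      X0.mulVec (KU.mulVec α) = v ∧
      X.mulVec (KU.mulVec α) + X.mulVec (K0.mulVec β) =
        (Wmat T n * LamMat T n lam).mulVec (X0.mulVec (KU.mulVec α)) ∧
      ((1 : Matrix (Fin T) (Fin T) ℝ) ⊗ₖ K * Zmat T n * LamMat T n lam).mulVec
          (X0.mulVec (KU.mulVec α)) + U.mulVec (K0.mulVec β) = 0 :=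
  stmt7_general A B X0 X U hdata KU K0 hKU hK0 hPE K lam v heig
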